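/- arXiv:1510.02287 — 2 statements merged into one kernel-verified Lean document; each statement's English description precedes it below -/
import Mathlib

section
/- Let f be a holomorphic germ at 0 with f(0)=0 and f'(0)=τ where τ^m=1 for some positive integer m, and suppose f^m (the m-th iterate) has expansion f^m(ξ)=ξ+A·ξ^{n+1}+O(ξ^{n+2}) with A≠0. Then there is no holomorphic germ h with h(0)=0, h'(0)=1 such that h^{-1}∘f∘h(ξ)=τ·ξ+O(ξ^{n+2}). -/
open Filter Asymptotics Topology

/-- If `f` is a holomorphic germ at `0` with `f 0 = 0`, `f' 0 = τ`, `τ^m = 1`, and the `m`-th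
iterate satisfies `f^[m] ξ = ξ + A ξ^(n+1) + O(ξ^(n+2))` with `A ≠ 0`, then there is no
holomorphic germ `h` with `h 0 = 0`, `h' 0 = 1` conjugating `f` to `τ·ξ + O(ξ^(n+2))`. -/
theorem stmt0 (f : ℂ → ℂ) (τ A : ℂ) (m n : ℕ) (hm : 0 < m) (hn : 1 ≤ n)
    (hf : AnalyticAt ℂ f 0) (hf0 : f 0 = 0) (hf' : deriv f 0 = τ) (hτ : τ ^ m = 1)
    (hA : A ≠ 0)
    (hexp : (fun ξ : ℂ => f^[m] ξ - (ξ + A * ξ ^ (n + 1))) =O[𝓝 0] fun ξ : ℂ => ξ ^ (n + 2)) :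
    ¬ ∃ h hinv : ℂ → ℂ, AnalyticAt ℂ h 0 ∧ h 0 = 0 ∧ deriv h 0 = 1 ∧
      (∀ᶠ ξ in 𝓝 (0:ℂ), hinv (h ξ) = ξ) ∧ (∀ᶠ ξ in 𝓝 (0:ℂ), h (hinv ξ) = ξ) ∧
      (fun ξ : ℂ => hinv (f (h ξ)) - τ * ξ) =O[𝓝 (0:ℂ)] fun ξ : ℂ => ξ ^ (n + 2) := by
  rintro ⟨h, hinv, hhA, hh0, hh', hleft, hright, hbig⟩
  set g : ℂ → ℂ := fun ξ => hinv (f (h ξ)) with hgdef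
  -- basic continuity / tendsto facts
  have hht : Tendsto h (𝓝 0) (𝓝 0) := by
    simpa [hh0] using hhA.continuousAt.tendsto
  have hft : Tendsto f (𝓝 0) (𝓝 0) := by
    simpa [hf0] using hf.continuousAt.tendsto
  have hfkt : ∀ k : ℕ, Tendsto f^[k] (𝓝 (0:ℂ)) (𝓝 0) := by
    intro k
    induction k with
    | zero => simpa using (tendsto_id : Tendsto id (𝓝 (0:ℂ)) (𝓝 0))
    | succ k ih =>
      rw [Function.iterate_succ']
      exact hft.comp ih
  -- ξ^(n+2) = O(ξ)
  have hxO : (fun ξ : ℂ => ξ ^ (n + 2)) =O[𝓝 (0:ℂ)] fun ξ => ξ := by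
    have h1 : (fun ξ : ℂ => ξ ^ (n + 1)) =O[𝓝 (0:ℂ)] (fun _ => (1:ℂ)) := by
      have : Tendsto (fun ξ : ℂ => ξ ^ (n + 1)) (𝓝 0) (𝓝 (0 ^ (n + 1))) :=
        (continuous_pow (n + 1)).tendsto 0
      exact this.isBigO_one ℂ
    have := h1.mul (isBigO_refl (fun ξ : ℂ => ξ) (𝓝 0))
    simpa [pow_succ] using this
  -- inductive big-O estimates for iterates of g
  have hgO : ∀ k : ℕ, ((fun ξ => g^[k] ξ - τ ^ k * ξ) =O[𝓝 (0:ℂ)] fun ξ => ξ ^ (n + 2)) := by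
    intro k
    induction k with
    | zero =>
      have hz : (fun ξ : ℂ => g^[0] ξ - τ ^ 0 * ξ) = fun _ => (0:ℂ) := by
        funext ξ; simp
      rw [hz]
      exact isBigO_zero _ _
    | succ k ih =>
      -- g^[k] = O(ξ)
      have hgkO : (fun ξ => g^[k] ξ) =O[𝓝 (0:ℂ)] fun ξ => ξ := by
        have h2 : (fun ξ : ℂ => τ ^ k * ξ) =O[𝓝 (0:ℂ)] fun ξ => ξ :=
          (isBigO_refl _ _).const_mul_left _
        have := (ih.trans hxO).add h2
        simpa using this
      have hgkt : Tendsto (fun ξ => g^[k] ξ) (𝓝 (0:ℂ)) (𝓝 0) :=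
        hgkO.trans_tendsto tendsto_id
      -- E(g^[k] ξ) term
      have hE : (fun ξ => g (g^[k] ξ) - τ * g^[k] ξ) =O[𝓝 (0:ℂ)] fun ξ => ξ ^ (n + 2) := by
        have := hbig.comp_tendsto hgkt
        exact this.trans ((hgkO.pow (n + 2)))
      have hT : (fun ξ : ℂ => τ * (g^[k] ξ - τ ^ k * ξ)) =O[𝓝 (0:ℂ)] fun ξ => ξ ^ (n + 2) :=
        ih.const_mul_left τ
      have := hE.add hT
      refine this.congr_left fun ξ => ?_
      rw [Function.iterate_succ_apply']
      ring
  -- g^[k] agrees with hinv ∘ f^[k] ∘ h eventually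
  have hconj : ∀ k : ℕ, ∀ᶠ ξ in 𝓝 (0:ℂ), g^[k] ξ = hinv (f^[k] (h ξ)) := by
    intro k
    induction k with
    | zero => exact hleft.mono fun ξ hξ => by simpa using hξ.symm
    | succ k ih =>
      have htend : Tendsto (fun ξ => f^[k] (h ξ)) (𝓝 (0:ℂ)) (𝓝 0) :=
        (hfkt k).comp hht
      have hmem : ∀ᶠ ξ in 𝓝 (0:ℂ), h (hinv (f^[k] (h ξ))) = f^[k] (h ξ) :=
        htend.eventually hright
      filter_upwards [ih, hmem] with ξ hξ1 hξ2
      rw [Function.iterate_succ_apply', hξ1, hgdef]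
      simp only []
      rw [hξ2, ← Function.iterate_succ_apply' f]
  -- so hinv (f^[m] (h ξ)) - ξ = O(ξ^(n+2))
  have hu : (fun ξ => hinv (f^[m] (h ξ)) - ξ) =O[𝓝 (0:ℂ)] fun ξ => ξ ^ (n + 2) := by
    refine (hgO m).congr' ?_ EventuallyEq.rfl
    filter_upwards [hconj m] with ξ hξ
    rw [hξ, hτ, one_mul]
  -- h is Lipschitz near 0
  obtain ⟨K, t, ht, hlip⟩ :=
    (hhA.contDiffAt (n := 1)).exists_lipschitzOnWith
  -- F(h ξ) := f^[m] (h ξ) tends to 0; hinv (F (h ξ)) tends to 0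
  have hFt : Tendsto (fun ξ => f^[m] (h ξ)) (𝓝 (0:ℂ)) (𝓝 0) := (hfkt m).comp hht
  have hIt : Tendsto (fun ξ => hinv (f^[m] (h ξ))) (𝓝 (0:ℂ)) (𝓝 0) := by
    have h1 : Tendsto (fun ξ => hinv (f^[m] (h ξ)) - ξ) (𝓝 (0:ℂ)) (𝓝 0) :=
      hu.trans_tendsto (by simpa using ((continuous_pow (n+2)).tendsto (0:ℂ)))
    simpa using h1.add tendsto_id
  -- F(h ξ) - h ξ = O(ξ^(n+2)) via Lipschitz
  have hFh : (fun ξ => f^[m] (h ξ) - h ξ) =O[𝓝 (0:ℂ)] fun ξ => ξ ^ (n + 2) := by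
    have hb : (fun ξ => h (hinv (f^[m] (h ξ))) - h ξ) =O[𝓝 (0:ℂ)]
        fun ξ => hinv (f^[m] (h ξ)) - ξ := by
      rw [isBigO_iff]
      refine ⟨K, ?_⟩
      filter_upwards [hIt.eventually ht, eventually_mem_nhds_iff.mpr ht] with ξ hξ1 hξ2
      have := hlip.dist_le_mul _ hξ1 _ (mem_of_mem_nhds hξ2)
      simpa [dist_eq_norm] using this
    have hb2 := hb.trans hu
    refine hb2.congr' ?_ EventuallyEq.rfl
    filter_upwards [hFt.eventually hright] with ξ hξ
    rw [hξ]
  -- f^[m](h ξ) - (h ξ + A (h ξ)^(n+1)) = O(ξ^(n+2))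
  have hhO : (fun ξ => h ξ) =O[𝓝 (0:ℂ)] fun ξ => ξ := by
    have hd : HasDerivAt h 1 0 := by
      have := hhA.differentiableAt.hasDerivAt
      rwa [hh'] at this
    have hlo : (fun ξ : ℂ => h ξ - ξ) =o[𝓝 (0:ℂ)] fun ξ => ξ := by
      have := hasDerivAt_iff_isLittleO.mp hd
      simpa [hh0] using this
    have := hlo.isBigO.add (isBigO_refl (fun ξ : ℂ => ξ) (𝓝 0))
    simpa using this
  have hexp2 : (fun ξ => f^[m] (h ξ) - (h ξ + A * (h ξ) ^ (n + 1))) =O[𝓝 (0:ℂ)]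
      fun ξ => ξ ^ (n + 2) := by
    have := hexp.comp_tendsto hht
    exact this.trans ((hhO.pow (n + 2)))
  -- hence A * (h ξ)^(n+1) = O(ξ^(n+2))
  have hAh : (fun ξ => A * (h ξ) ^ (n + 1)) =O[𝓝 (0:ℂ)] fun ξ => ξ ^ (n + 2) := by
    have := hFh.sub hexp2
    refine this.congr_left fun ξ => ?_
    ring
  have hhpow : (fun ξ => (h ξ) ^ (n + 1)) =O[𝓝 (0:ℂ)] fun ξ => ξ ^ (n + 2) := by
    have := hAh.const_mul_left A⁻¹
    refine this.congr_left fun ξ => ?_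
    field_simp
  -- ξ = O(h ξ)
  have hxh : (fun ξ : ℂ => ξ) =O[𝓝 (0:ℂ)] fun ξ => h ξ := by
    have hd : HasDerivAt h 1 0 := by
      have := hhA.differentiableAt.hasDerivAt
      rwa [hh'] at this
    have hlo : (fun ξ : ℂ => h ξ - ξ) =o[𝓝 (0:ℂ)] fun ξ => ξ := by
      have := hasDerivAt_iff_isLittleO.mp hd
      simpa [hh0] using this
    have := hlo.right_isBigO_add
    simpa using this
  have hfinal : (fun ξ : ℂ => ξ ^ (n + 1)) =O[𝓝 (0:ℂ)] fun ξ => ξ ^ (n + 2) :=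
    (hxh.pow (n + 1)).trans hhpow
  -- contradiction
  have hlo2 : (fun ξ : ℂ => ξ ^ (n + 2)) =o[𝓝 (0:ℂ)] fun ξ => ξ ^ (n + 1) := by
    have h1 : (fun ξ : ℂ => ξ) =o[𝓝 (0:ℂ)] (fun _ => (1:ℂ)) :=
      (isLittleO_one_iff ℂ).mpr tendsto_id
    have := h1.mul_isBigO (isBigO_refl (fun ξ : ℂ => ξ ^ (n + 1)) (𝓝 0))
    simpa [pow_succ, mul_comm] using this
  have : (fun ξ : ℂ => ξ ^ (n + 1)) =o[𝓝 (0:ℂ)] fun ξ => ξ ^ (n + 1) :=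
    hfinal.trans_isLittleO hlo2
  refine isLittleO_irrefl ?_ this
  have : ∃ᶠ ξ in 𝓝 (0:ℂ), ξ ≠ 0 := by
    rw [Filter.frequently_iff_neBot]
    exact (show (𝓝[≠] (0:ℂ)).NeBot by infer_instance)
  exact this.mono fun ξ hξ => pow_ne_zero _ hξ
end

section
/- Let f be holomorphic near a repelling periodic point η of exact period m (f^m(η)=η, |(f^m)'(η)|>1). Then there exists a sequence {η_n}_{n≥0} with η_0 in any prescribed punctured neighborhood of η avoiding the cycle, such that f(η_{n+1})=η_n for all n, and the set of accumulation points of {η_n} equals the cycle {η, f(η), …, f^{m-1}(η)}. -/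
/-!
Since `|(f^m)'(η)| > 1`, the inverse function theorem gives a branch `h` of `(f^m)⁻¹` fixing `η`
that contracts a small ball around `η`. The `h`-orbit `b j` of a point `b 0` of the ball off the
cycle is a backward orbit of `f^m` tending to `η`; inserting `f^[m-1] (b (j+1)), …, f (b (j+1))`
between `b j` and `b (j+1)` turns it into a backward orbit of `f`. Along the residue class of
`s` mod `m` this sequence is `f^[m-s] (b (q+1)) → f^[m-s] η`, so its cluster points are exactly
the cycle.
-/

open Filter Topology Set Function
open scoped NNReal

theorem tendsto_of_forall_tendsto_mul_add {X : Type*} {l : Filter X} {u : ℕ → X} {m : ℕ}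
    (hm : 0 < m) (h : ∀ s < m, Tendsto (fun q => u (m * q + s)) atTop l) :
    Tendsto u atTop l := by
  intro W hW
  rw [mem_map]
  have hres : ∀ᶠ q in atTop, ∀ s ∈ Iio m, u (m * q + s) ∈ W :=
    (finite_Iio m).eventually_all.2 fun s hs => h s hs hW
  filter_upwards [(Nat.tendsto_div_const_atTop hm.ne').eventually hres] with n hn
  show u n ∈ W
  simpa only [Nat.div_add_mod] using hn (n % m) (Nat.mod_lt n hm)

theorem setOf_mapClusterPt_eq_image_of_tendsto_mul_add {X : Type*} [TopologicalSpace X]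
    [T2Space X] {u : ℕ → X} {m : ℕ} {p : ℕ → X} (hm : 0 < m)
    (h : ∀ s < m, Tendsto (fun q => u (m * q + s)) atTop (𝓝 (p s))) :
    {x | MapClusterPt x atTop u} = p '' Iio m := by
  ext x
  constructor
  · intro hx
    have hlim : Tendsto u atTop ((Finset.range m).sup fun s => 𝓝 (p s)) :=
      tendsto_of_forall_tendsto_mul_add hm fun s hs =>
        (h s hs).mono_right (Finset.le_sup (f := fun s => 𝓝 (p s)) (Finset.mem_range.2 hs))
    by_contra hxp
    refine clusterPt_iff_not_disjoint.1 (ClusterPt.mono hx hlim)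
      (Finset.disjoint_sup_right.2 fun s hs => disjoint_nhds_nhds.2 ?_)
    rintro rfl
    exact hxp ⟨s, Finset.mem_range.1 hs, rfl⟩
  · rintro ⟨s, hs, rfl⟩
    refine MapClusterPt.of_comp (φ := fun q => m * q + s) ?_ (h s hs).mapClusterPt
    exact tendsto_atTop_mono (fun q => (Nat.le_mul_of_pos_left q hm).trans (Nat.le_add_right _ s))
      tendsto_id

theorem Function.IsPeriodicPt.image_iterate_sub_Iio {α : Type*} {f : α → α} {x : α} {m : ℕ}
    (h : IsPeriodicPt f m x) : (fun s => f^[m - s] x) '' Iio m = (fun k => f^[k] x) '' Iio m := by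
  ext y
  constructor
  · rintro ⟨s, hs, rfl⟩
    exact ⟨(m - s) % m, Nat.mod_lt _ (Nat.zero_lt_of_lt hs), h.iterate_mod_apply _⟩
  · rintro ⟨k, hk, rfl⟩
    rcases Nat.eq_zero_or_pos k with rfl | hk0
    · exact ⟨0, hk, h⟩
    · refine ⟨m - k, Nat.sub_lt (Nat.zero_lt_of_lt hk) hk0, ?_⟩
      simp only [Nat.sub_sub_self (le_of_lt hk)]

/-- Writing `n = m * q + s` with `s < m`, the `n`-th term is `f^[m - s] (b (q + 1))`; for
`s = 0` this is `b q` once `f^[m] (b (q + 1)) = b q`. -/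
def backwardOrbitOfIterate {α : Type*} (f : α → α) (m : ℕ) (b : ℕ → α) (n : ℕ) : α :=
  f^[m - n % m] (b (n / m + 1))

section backwardOrbitOfIterate

variable {α : Type*} {f : α → α} {m : ℕ} {b : ℕ → α}

theorem backwardOrbitOfIterate_mul_add {q s : ℕ} (hs : s < m) :
    backwardOrbitOfIterate f m b (m * q + s) = f^[m - s] (b (q + 1)) := by
  have hm : 0 < m := by omega
  simp only [backwardOrbitOfIterate, Nat.mul_add_mod, Nat.mod_eq_of_lt hs,
    Nat.mul_add_div hm, Nat.div_eq_of_lt hs, add_zero]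

variable (hb : ∀ j, f^[m] (b (j + 1)) = b j)
include hb

theorem backwardOrbitOfIterate_zero : backwardOrbitOfIterate f m b 0 = b 0 := by
  simpa [backwardOrbitOfIterate] using hb 0

theorem apply_backwardOrbitOfIterate_succ (hm : 0 < m) (n : ℕ) :
    f (backwardOrbitOfIterate f m b (n + 1)) = backwardOrbitOfIterate f m b n := by
  obtain ⟨q, s, hs, rfl⟩ : ∃ q s, s < m ∧ n = m * q + s :=
    ⟨n / m, n % m, Nat.mod_lt n hm, (Nat.div_add_mod n m).symm⟩
  rw [backwardOrbitOfIterate_mul_add hs]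
  rcases Nat.lt_or_ge (s + 1) m with hs1 | hs1
  · rw [add_assoc, backwardOrbitOfIterate_mul_add hs1, ← iterate_succ_apply' f]
    congr 2
    omega
  · have hsm : s + 1 = m := by omega
    have : m * q + s + 1 = m * (q + 1) + 0 := by rw [Nat.mul_succ]; omega
    rw [this, backwardOrbitOfIterate_mul_add hm, Nat.sub_zero, hb, show m - s = 1 by omega,
      iterate_one]

end backwardOrbitOfIterate

theorem HasStrictDerivAt.exists_contracting_rightInverse {𝕜 : Type*} [NontriviallyNormedField 𝕜]
    [CompleteSpace 𝕜] {g : 𝕜 → 𝕜} {g' x : 𝕜} (hg : HasStrictDerivAt g g' x) (hx : g x = x)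
    (hg' : 1 < ‖g'‖) :
    ∃ h : 𝕜 → 𝕜, ∃ K : ℝ≥0, K < 1 ∧ ∀ᶠ y in 𝓝 x, g (h y) = y ∧ dist (h y) x ≤ K * dist y x := by
  have hg0 : g' ≠ 0 := norm_pos_iff.1 (one_pos.trans hg')
  set h := hg.localInverse g g' x hg0
  have hhx : h x = x := by
    simpa only [hx] using (hg.eventually_left_inverse hg0).self_of_nhds
  have hh : HasStrictDerivAt h g'⁻¹ x := by simpa only [hx] using hg.to_localInverse hg0
  obtain ⟨K, hK, hK1⟩ : ∃ K : ℝ≥0, ‖g'⁻¹‖₊ < K ∧ K < 1 := exists_between <| by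
    rw [nnnorm_inv, inv_lt_one₀ (nnnorm_pos.2 hg0)]
    exact hg'
  obtain ⟨s, hs, hlip⟩ :=
    hh.hasStrictFDerivAt.exists_lipschitzOnWith_of_nnnorm_lt K (by simpa using hK)
  refine ⟨h, K, hK1, ?_⟩
  have hright : ∀ᶠ y in 𝓝 x, g (h y) = y := by
    simpa only [hx] using hg.eventually_right_inverse hg0
  filter_upwards [hright, hs] with y hy hys
  exact ⟨hy, by simpa only [hhx] using hlip.dist_le_mul y hys x (mem_of_mem_nhds hs)⟩

section contraction

variable {X : Type*} [PseudoMetricSpace X] {h : X → X} {x : X} {K : ℝ≥0} {r : ℝ}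

theorem iterate_mem_ball_of_dist_le_mul (hK : K ≤ 1)
    (hh : ∀ y ∈ Metric.ball x r, dist (h y) x ≤ K * dist y x) {y : X} (hy : y ∈ Metric.ball x r)
    (j : ℕ) : h^[j] y ∈ Metric.ball x r ∧ dist (h^[j] y) x ≤ K ^ j * dist y x := by
  induction j with
  | zero => simpa using hy
  | succ j ih =>
    have hstep := hh _ ih.1
    rw [iterate_succ_apply']
    refine ⟨?_, ?_⟩
    · rw [Metric.mem_ball] at ih ⊢
      calc dist (h (h^[j] y)) x ≤ K * dist (h^[j] y) x := hstep
        _ ≤ 1 * dist (h^[j] y) x := by gcongr; exact_mod_cast hK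
        _ < r := by rw [one_mul]; exact ih.1
    · calc dist (h (h^[j] y)) x ≤ K * dist (h^[j] y) x := hstep
        _ ≤ K * (K ^ j * dist y x) := by gcongr; exact ih.2
        _ = K ^ (j + 1) * dist y x := by ring

theorem tendsto_iterate_of_dist_le_mul (hK : K < 1)
    (hh : ∀ y ∈ Metric.ball x r, dist (h y) x ≤ K * dist y x) {y : X} (hy : y ∈ Metric.ball x r) :
    Tendsto (fun j => h^[j] y) atTop (𝓝 x) := by
  rw [tendsto_iff_dist_tendsto_zero]
  refine squeeze_zero (fun _ => dist_nonneg)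
    (fun j => (iterate_mem_ball_of_dist_le_mul hK.le hh hy j).2) ?_
  simpa using (tendsto_pow_atTop_nhds_zero_of_lt_one K.coe_nonneg hK).mul_const (dist y x)

end contraction

theorem analyticAt_iterate {𝕜 E : Type*} [NontriviallyNormedField 𝕜] [NormedAddCommGroup E]
    [NormedSpace 𝕜 E] {f : E → E} {x : E} (hf : ∀ k, AnalyticAt 𝕜 f (f^[k] x)) (n : ℕ) :
    AnalyticAt 𝕜 f^[n] x := by
  induction n with
  | zero => exact analyticAt_id
  | succ n ih => rw [iterate_succ']; exact (hf n).comp ih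

theorem stmt7_general (f : ℂ → ℂ) (η : ℂ) (m : ℕ) (hm : 0 < m)
    (han : ∀ k : ℕ, AnalyticAt ℂ f (f^[k] η))
    (hper : f^[m] η = η)
    (hrep : 1 < ‖deriv (f^[m]) η‖) :
    ∀ V ∈ 𝓝 η, ∃ a : ℕ → ℂ,
      a 0 ∈ V ∧ (∀ k : ℕ, a 0 ≠ f^[k] η) ∧
      (∀ j : ℕ, f (a (j + 1)) = a j) ∧
      {x : ℂ | MapClusterPt x atTop a} = {x : ℂ | ∃ k : ℕ, k < m ∧ x = f^[k] η} := by
  intro V hV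
  have hη : IsPeriodicPt f m η := hper
  obtain ⟨h, K, hK, hinv⟩ :=
    (analyticAt_iterate han m).hasStrictDerivAt.exists_contracting_rightInverse hper hrep
  obtain ⟨r, hr, hball⟩ := Metric.eventually_nhds_iff_ball.1 (hinv.and hV)
  obtain ⟨b₀, hb₀cycle, hb₀⟩ : ∃ b₀ ∉ (f^[·] η) '' Iio m, b₀ ∈ Metric.ball η r :=
    ((finite_Iio m).image _).countable.dense_compl ℂ |>.exists_mem_open Metric.isOpen_ball
      ⟨η, Metric.mem_ball_self hr⟩
  set b : ℕ → ℂ := fun j => h^[j] b₀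
  have hb_ball (j : ℕ) : b j ∈ Metric.ball η r :=
    (iterate_mem_ball_of_dist_le_mul hK.le (fun y hy => (hball y hy).1.2) hb₀ j).1
  have hb (j : ℕ) : f^[m] (b (j + 1)) = b j := by
    simp only [b, iterate_succ_apply']
    exact (hball _ (hb_ball j)).1.1
  have hbη : Tendsto b atTop (𝓝 η) :=
    tendsto_iterate_of_dist_le_mul hK (fun y hy => (hball y hy).1.2) hb₀
  refine ⟨backwardOrbitOfIterate f m b, ?_, ?_, apply_backwardOrbitOfIterate_succ hb hm, ?_⟩
  · rw [backwardOrbitOfIterate_zero hb]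
    exact (hball b₀ hb₀).2
  · intro k hk
    rw [backwardOrbitOfIterate_zero hb, ← hη.iterate_mod_apply] at hk
    exact hb₀cycle ⟨k % m, Nat.mod_lt k hm, hk.symm⟩
  · rw [setOf_mapClusterPt_eq_image_of_tendsto_mul_add (p := fun s => f^[m - s] η) hm,
      hη.image_iterate_sub_Iio]
    · ext x
      simp [eq_comm]
    · intro s hs
      simp only [backwardOrbitOfIterate_mul_add hs]
      exact (analyticAt_iterate han _).continuousAt.tendsto.comp
        (hbη.comp (tendsto_add_atTop_nat 1))

/-- Backward orbit accumulating exactly on a repelling cycle: let `f` be holomorphic near the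
(repelling, exact period `m`) cycle of `η`. Then for any neighborhood `V` of `η` there is a
sequence `a` with `a 0 ∈ V` avoiding the cycle, `f (a (n+1)) = a n`, and whose set of
accumulation points is exactly the cycle `{η, f η, …, f^[m-1] η}`. -/
theorem stmt7 (f : ℂ → ℂ) (η : ℂ) (m : ℕ) (hm : 0 < m)
    (han : ∀ k : ℕ, AnalyticAt ℂ f (f^[k] η))
    (hper : f^[m] η = η) (hexact : ∀ k : ℕ, 0 < k → k < m → f^[k] η ≠ η)
    (hrep : 1 < ‖deriv (f^[m]) η‖) :
    ∀ V ∈ 𝓝 η, ∃ a : ℕ → ℂ,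
      a 0 ∈ V ∧ (∀ k : ℕ, a 0 ≠ f^[k] η) ∧
      (∀ j : ℕ, f (a (j + 1)) = a j) ∧
      {x : ℂ | MapClusterPt x atTop a} = {x : ℂ | ∃ k : ℕ, k < m ∧ x = f^[k] η} :=
  stmt7_general f η m hm han hper hrep
end
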